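/- The function p ↦ exp(−λ p) * F(p) is strictly decreasing on [0,∞); equivalently, the expected cost U_OFF(p) = K * (1 − exp(−λ p) * F(p)) of playing OFF is strictly increasing in the population profile p on [0,∞). -/

import Mathlib

open Finset

/-! Write `c t = λ r t` and `m_q(x) = ∏ t, q_t ^ x_t / x_t!`, so that `F p = ∑_{x ∈ S} m_{c p}(x)`.
The Poisson recursion `x_t m_q(x) = q_t m_q(x - e_t)` and Euler's identity for the homogeneous
monomials give, because `S` is a lower set, `F' p = ∑_t c_t ∑_{y ∈ S, y + e_t ∈ S} m_{c p}(y)`.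
Hence `(e^{-λ p} F p)' = -e^{-λ p} ∑_t c_t ∑_{y ∈ S, y + e_t ∉ S} m_{c p}(y)`, and this is negative
for `p > 0`: a point of `S` of maximal total size has no successor `y + e_t` in `S`. -/

noncomputable def poissonWeight {ι : Type*} [Fintype ι] (c : ι → ℝ) (x : ι → ℕ) : ℝ :=
  ∏ i, c i ^ x i / (x i).factorial

section

variable {ι : Type*} [Fintype ι]

theorem poissonWeight_pos {c : ι → ℝ} (hc : ∀ i, 0 < c i) (x : ι → ℕ) : 0 < poissonWeight c x :=
  prod_pos fun i _ => div_pos (pow_pos (hc i) _) (by positivity)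

theorem poissonWeight_mul_const (c : ι → ℝ) (p : ℝ) (x : ι → ℕ) :
    poissonWeight (fun i => c i * p) x = poissonWeight c x * p ^ ∑ i, x i := by
  simp only [poissonWeight, ← prod_pow_eq_pow_sum, ← prod_mul_distrib]
  exact prod_congr rfl fun i _ => by rw [mul_pow]; ring

theorem poissonWeight_add_single_mul [DecidableEq ι] (c : ι → ℝ) (x : ι → ℕ) (i : ι) :
    poissonWeight c (x + Pi.single i 1) * (x i + 1) = c i * poissonWeight c x := by
  set y : ι → ℕ := x + Pi.single i 1
  have hrest : ∏ j ∈ univ.erase i, c j ^ y j / (y j).factorial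
      = ∏ j ∈ univ.erase i, c j ^ x j / (x j).factorial :=
    prod_congr rfl fun j hj => by simp [y, ne_of_mem_erase hj]
  have hyi : y i = x i + 1 := by simp [y]
  rw [poissonWeight, poissonWeight, ← mul_prod_erase univ _ (mem_univ i),
    ← mul_prod_erase univ _ (mem_univ i), hrest, hyi, Nat.factorial_succ, pow_succ]
  push_cast
  field_simp

theorem sum_coord_mul_poissonWeight [DecidableEq ι] {S : Finset (ι → ℕ)}
    (hS : IsLowerSet (S : Set (ι → ℕ))) (c : ι → ℝ) (i : ι) :
    ∑ x ∈ S, (x i : ℝ) * poissonWeight c x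
      = c i * ∑ y ∈ S with y + Pi.single i 1 ∈ S, poissonWeight c y := by
  have hvanish : ∀ x ∈ S, x ∉ (S.filter (· + Pi.single i 1 ∈ S)).map
      (addRightEmbedding (Pi.single i 1)) → (x i : ℝ) * poissonWeight c x = 0 := by
    intro x hx hx'
    suffices x i = 0 by simp [this]
    by_contra hxi
    have hsingle : Pi.single i 1 ≤ x := fun j => by
      rcases eq_or_ne j i with rfl | hji
      · simpa [Nat.one_le_iff_ne_zero] using hxi
      · simp [hji]
    refine hx' (mem_map.2 ⟨x - Pi.single i 1, mem_filter.2 ⟨hS tsub_le_self hx, ?_⟩, ?_⟩) <;>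
      simp [tsub_add_cancel_of_le hsingle, hx]
  rw [mul_sum, ← sum_subset (map_subset_iff_subset_preimage.2 ?_) hvanish, sum_map]
  · refine sum_congr rfl fun y _ => ?_
    simp [← poissonWeight_add_single_mul c y i, mul_comm]
  · intro y hy
    simpa using (mem_filter.1 hy).2

theorem exists_add_single_notMem [DecidableEq ι] (S : Finset (ι → ℕ)) (hS : S.Nonempty) (i : ι) :
    ∃ y ∈ S, y + Pi.single i 1 ∉ S := by
  obtain ⟨y, hy, hmax⟩ := S.exists_max_image (fun y => ∑ j, y j) hS
  refine ⟨y, hy, fun h => ?_⟩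
  have := hmax _ h
  simp [sum_add_distrib] at this

theorem hasDerivAt_poissonWeight_mul_const (c : ι → ℝ) (x : ι → ℕ) {p : ℝ} (hp : p ≠ 0) :
    HasDerivAt (fun p => poissonWeight (fun i => c i * p) x)
      ((∑ i, (x i : ℝ)) * poissonWeight (fun i => c i * p) x / p) p := by
  simp only [poissonWeight_mul_const]
  refine ((hasDerivAt_pow (∑ i, x i) p).const_mul (poissonWeight c x)).congr_deriv ?_
  rw [← Nat.cast_sum]
  rcases Nat.eq_zero_or_pos (∑ i, x i) with h | h
  · simp [h]
  · rw [← Nat.succ_pred_eq_of_pos h, pow_succ, Nat.succ_sub_one]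
    field_simp

theorem continuous_sum_poissonWeight_mul_const (c : ι → ℝ) (S : Finset (ι → ℕ)) :
    Continuous fun p => ∑ x ∈ S, poissonWeight (fun i => c i * p) x := by
  simp only [poissonWeight_mul_const]
  fun_prop

theorem hasDerivAt_sum_poissonWeight_mul_const [DecidableEq ι] {S : Finset (ι → ℕ)}
    (hS : IsLowerSet (S : Set (ι → ℕ))) (c : ι → ℝ) {p : ℝ} (hp : p ≠ 0) :
    HasDerivAt (fun p => ∑ x ∈ S, poissonWeight (fun i => c i * p) x)
      (∑ i, c i * ∑ y ∈ S with y + Pi.single i 1 ∈ S, poissonWeight (fun j => c j * p) y) p := by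
  refine (HasDerivAt.fun_sum fun x _ => hasDerivAt_poissonWeight_mul_const c x hp).congr_deriv ?_
  calc ∑ x ∈ S, (∑ i, (x i : ℝ)) * poissonWeight (fun i => c i * p) x / p
      = (∑ i, ∑ x ∈ S, (x i : ℝ) * poissonWeight (fun i => c i * p) x) / p := by
        rw [← sum_div, sum_comm]
        simp only [sum_mul]
    _ = ∑ i, c i * ∑ y ∈ S with y + Pi.single i 1 ∈ S, poissonWeight (fun j => c j * p) y := by
        simp only [sum_coord_mul_poissonWeight hS, sum_div]
        refine sum_congr rfl fun i _ => ?_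
        field_simp

theorem strictAntiOn_exp_mul_sum_poissonWeight [DecidableEq ι] [Nonempty ι] {c : ι → ℝ}
    (hc : ∀ i, 0 < c i) {S : Finset (ι → ℕ)}
    (hS : IsLowerSet (S : Set (ι → ℕ))) (hne : S.Nonempty) :
    StrictAntiOn (fun p => Real.exp (-((∑ i, c i) * p)) *
      ∑ x ∈ S, poissonWeight (fun i => c i * p) x) (Set.Ici 0) := by
  refine strictAntiOn_of_deriv_neg (convex_Ici 0)
    ((Continuous.mul (by fun_prop) (continuous_sum_poissonWeight_mul_const c S)).continuousOn)
    fun p hp => ?_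
  rw [interior_Ici, Set.mem_Ioi] at hp
  have hexp : HasDerivAt (fun p => Real.exp (-((∑ i, c i) * p)))
      (Real.exp (-((∑ i, c i) * p)) * -(∑ i, c i)) p := by
    simpa using ((hasDerivAt_id p).const_mul (∑ i, c i)).neg.exp
  rw [(hexp.fun_mul (hasDerivAt_sum_poissonWeight_mul_const hS c hp.ne')).deriv]
  have hlt : ∑ i, c i * ∑ y ∈ S with y + Pi.single i 1 ∈ S, poissonWeight (fun j => c j * p) y
      < (∑ i, c i) * ∑ x ∈ S, poissonWeight (fun i => c i * p) x := by
    rw [sum_mul]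
    refine sum_lt_sum_of_nonempty univ_nonempty fun i _ => mul_lt_mul_of_pos_left ?_ (hc i)
    obtain ⟨y, hy, hy'⟩ := exists_add_single_notMem S hne i
    exact sum_lt_sum_of_subset (filter_subset _ _) hy (by simp [hy'])
      (poissonWeight_pos (fun j => mul_pos (hc j) hp) y)
      fun x _ _ => (poissonWeight_pos (fun j => mul_pos (hc j) hp) x).le
  nlinarith [Real.exp_pos (-((∑ i, c i) * p))]

end

/-- The non-propagation probability `p ↦ exp(−λp) * F(p)` is
strictly decreasing on `[0,∞)`; equivalently, the expected cost
`U_OFF(p) = K * (1 − exp(−λp) * F(p))` of playing OFF is strictly increasing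
in the population profile `p` on `[0,∞)`. -/
theorem UOFF_strictMono (T : ℕ) (hT : 1 ≤ T)
    (lam : ℝ) (hlam : 0 < lam)
    (r : Fin T → ℝ) (hr : ∀ t, 0 < r t) (hrsum : ∑ t, r t = 1)
    (τ : Fin T → ℝ) (hτ : ∀ t, 0 < τ t)
    (K : ℝ) (hK : 0 < K)
    (S : Set (Fin T → ℕ))
    (hSdef : S = {x : Fin T → ℕ | ∑ t, (x t : ℝ) * τ t / (1 + τ t) < 1})
    (hSfin : S.Finite)
    (F : ℝ → ℝ)
    (hF : ∀ p : ℝ, F p =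
      ∑ x ∈ hSfin.toFinset, ∏ t, (lam * r t * p) ^ (x t) / (Nat.factorial (x t) : ℝ))
    (UOFF : ℝ → ℝ)
    (hUOFF : ∀ p : ℝ, UOFF p = K * (1 - Real.exp (-(lam * p)) * F p)) :
    StrictAntiOn (fun p : ℝ => Real.exp (-(lam * p)) * F p) (Set.Ici (0 : ℝ)) ∧
    StrictMonoOn UOFF (Set.Ici (0 : ℝ)) := by
  have : Nonempty (Fin T) := ⟨⟨0, hT⟩⟩
  have hsum : ∑ t, lam * r t = lam := by rw [← mul_sum, hrsum, mul_one]
  have hlower : IsLowerSet (hSfin.toFinset : Set (Fin T → ℕ)) := by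
    intro x y hyx hx
    simp only [Set.Finite.coe_toFinset, hSdef, Set.mem_ofPred_eq] at hx ⊢
    refine lt_of_le_of_lt (sum_le_sum fun t _ => ?_) hx
    have := hτ t
    gcongr
    exact hyx t
  have hanti : StrictAntiOn (fun p : ℝ => Real.exp (-(lam * p)) * F p) (Set.Ici 0) := by
    simpa only [hsum, hF, poissonWeight] using strictAntiOn_exp_mul_sum_poissonWeight
      (fun t => mul_pos hlam (hr t)) hlower ⟨0, by simp [hSdef]⟩
  refine ⟨hanti, fun a ha b hb hab => ?_⟩
  rw [hUOFF, hUOFF]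
  nlinarith [hanti ha hb hab]
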